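/- Let (X_1,…,X_d)ᵀ be a centered Gaussian random vector with covariance matrix Σ_d := (1−ρ)·I_d + ρ·𝟏𝟏ᵀ, where 𝟏 = (1,…,1)ᵀ ∈ ℝ^d and −1/(d−1) < ρ < 1. Then, as t → ∞, P(min_{i=1,…,d} X_i > t) ~ (1/((2π)^{d/2}|Σ_d|^{1/2})) · ((1+(d−1)ρ)/t)^d · exp(−(t²d/2)/(1+(d−1)ρ)), where |Σ_d| = (−1)^{d−1}(ρ−1)^{d−1}((d−1)ρ+1). In particular, for d = 2, P(min(X_1,X_2) > t) ~ ((1+ρ)^{3/2}/(2π(1−ρ)^{1/2} t²)) · exp(−t²/(1+ρ)) as t → ∞. -/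

import Mathlib

open MeasureTheory Filter Asymptotics Matrix Set Real Topology
open scoped Pointwise

noncomputable section

namespace GaussianTail

/-- The equicorrelation matrix `Σ_d = (1-ρ)·I_d + ρ·𝟏𝟏ᵀ`. -/
def covM (d : ℕ) (ρ : ℝ) : Matrix (Fin d) (Fin d) ℝ :=
  Matrix.of fun i j => if i = j then 1 else ρ

/-- The probability `P(min_{i=1,…,d} X_i > t)` for a centered Gaussian vector
`(X_1,…,X_d)ᵀ` with covariance matrix `Σ_d`, written as the integral of the Gaussian
density `(2π)^{-d/2}|Σ_d|^{-1/2} exp(-⟨x, Σ_d⁻¹ x⟩/2)` over the orthant `{x | ∀ i, x i > t}`. -/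
def minTailProb (d : ℕ) (ρ : ℝ) (t : ℝ) : ℝ :=
  ∫ x in {x : Fin d → ℝ | ∀ i, t < x i},
    (2 * Real.pi) ^ (-(d : ℝ) / 2) * ((covM d ρ).det) ^ (-(1 : ℝ) / 2) *
      Real.exp (-(x ⬝ᵥ ((covM d ρ)⁻¹ *ᵥ x)) / 2)

/-! ### Auxiliary linear algebra -/

/-- Explicit inverse of the equicorrelation matrix. -/
def invM (d : ℕ) (ρ : ℝ) : Matrix (Fin d) (Fin d) ℝ :=
  Matrix.of fun i j =>
    (if i = j then (1:ℝ) else 0) / (1 - ρ) - ρ / ((1 - ρ) * (1 + ((d:ℝ) - 1) * ρ))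

/-- The quadratic form `⟨x, Σ_d⁻¹ x⟩` in explicit form. -/
def Qf (d : ℕ) (ρ : ℝ) (x : Fin d → ℝ) : ℝ :=
  (∑ i, x i ^ 2) / (1 - ρ) - ρ * (∑ i, x i) ^ 2 / ((1 - ρ) * (1 + ((d:ℝ) - 1) * ρ))

lemma covM_mul_invM (d : ℕ) (hd : 1 ≤ d) {ρ : ℝ} (hc : (1:ℝ) - ρ ≠ 0)
    (hσ : (1:ℝ) + ((d:ℝ) - 1) * ρ ≠ 0) : covM d ρ * invM d ρ = 1 := by
  ext i j
  simp only [Matrix.mul_apply, covM, invM, Matrix.of_apply, Matrix.one_apply]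
  have h1 : ∀ k : Fin d, (if i = k then (1:ℝ) else ρ) *
      ((if k = j then (1:ℝ) else 0) / (1 - ρ) - ρ / ((1 - ρ) * (1 + ((d:ℝ) - 1) * ρ)))
      = (if k = j then (if i = k then (1:ℝ) else ρ) else 0) / (1-ρ)
        - (ρ + if i = k then (1-ρ) else 0) * (ρ / ((1 - ρ) * (1 + ((d:ℝ) - 1) * ρ))) := by
    intro k; split_ifs <;> ring
  rw [Finset.sum_congr rfl (fun k _ => h1 k)]
  rw [Finset.sum_sub_distrib, ← Finset.sum_div, Finset.sum_ite_eq' Finset.univ j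
    (fun k => if i = k then (1:ℝ) else ρ), ← Finset.sum_mul, Finset.sum_add_distrib,
    Finset.sum_ite_eq Finset.univ i (fun _ => (1:ℝ)-ρ)]
  simp only [Finset.mem_univ, if_true, Finset.sum_const, Finset.card_univ, Fintype.card_fin,
    nsmul_eq_mul]
  have hdr : (d:ℝ) ≥ 1 := by exact_mod_cast hd
  have hσ' : (1:ℝ) + ρ * ((d:ℝ) - 1) ≠ 0 := by contrapose! hσ; linarith
  split_ifs with h
  · field_simp; ring
  · field_simp; ring

lemma inv_covM (d : ℕ) (hd : 1 ≤ d) {ρ : ℝ} (hc : (1:ℝ) - ρ ≠ 0)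
    (hσ : (1:ℝ) + ((d:ℝ) - 1) * ρ ≠ 0) : (covM d ρ)⁻¹ = invM d ρ :=
  Matrix.inv_eq_right_inv (covM_mul_invM d hd hc hσ)

lemma det_covM (d : ℕ) (hd : 1 ≤ d) {ρ : ℝ} (hc : (1:ℝ) - ρ ≠ 0) :
    (covM d ρ).det = (1 - ρ) ^ (d - 1) * (1 + ((d:ℝ) - 1) * ρ) := by
  have hrepr : covM d ρ = (1 - ρ) •
      (1 + Matrix.replicateCol Unit (fun _ : Fin d => ρ/(1-ρ)) *
        Matrix.replicateRow Unit (fun _ : Fin d => (1:ℝ))) := by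
    ext i j
    simp only [covM, Matrix.of_apply, Matrix.smul_apply, Matrix.add_apply, Matrix.one_apply,
      Matrix.mul_apply, Matrix.replicateCol_apply, Matrix.replicateRow_apply, Finset.univ_unique,
      Finset.sum_singleton, smul_eq_mul]
    split_ifs <;> field_simp <;> ring
  rw [hrepr, Matrix.det_smul, Matrix.det_one_add_replicateCol_mul_replicateRow]
  simp only [dotProduct, Finset.sum_const, Finset.card_univ, Fintype.card_fin, nsmul_eq_mul,
    Fintype.card_fin, mul_one]
  have hd' : d = (d - 1) + 1 := (Nat.succ_pred_eq_of_pos hd).symm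
  rw [hd', pow_succ]
  have hcast : ((d - 1 + 1 : ℕ) : ℝ) = (d:ℝ) := by rw [← hd']
  rw [hcast]
  field_simp
  rw [Nat.add_sub_cancel]; ring

lemma dot_invM (d : ℕ) (ρ : ℝ) (x : Fin d → ℝ) :
    x ⬝ᵥ (invM d ρ *ᵥ x) = Qf d ρ x := by
  set r : ℝ := ρ / ((1 - ρ) * (1 + ((d:ℝ) - 1) * ρ)) with hr
  have inner : ∀ i, (invM d ρ *ᵥ x) i = x i / (1 - ρ) - r * ∑ j, x j := by
    intro i
    have expand : ∀ j, ((if i = j then (1:ℝ) else 0) / (1 - ρ) - r) * x j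
        = (if i = j then x j else 0) / (1 - ρ) - r * x j := by
      intro j; split_ifs <;> ring
    show (∑ j, ((if i = j then (1:ℝ) else 0) / (1 - ρ) - r) * x j) = _
    rw [Finset.sum_congr rfl (fun j _ => expand j), Finset.sum_sub_distrib, ← Finset.sum_div,
      Finset.sum_ite_eq Finset.univ i x, ← Finset.mul_sum]
    simp
  simp only [dotProduct, inner, mul_sub, Finset.sum_sub_distrib]
  rw [Finset.sum_congr rfl (fun i (_ : i ∈ Finset.univ) => by ring :
        ∀ i ∈ Finset.univ, x i * (x i / (1-ρ)) = x i ^ 2 / (1-ρ)), ← Finset.sum_div,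
    Finset.sum_congr rfl (fun i (_ : i ∈ Finset.univ) => by ring :
        ∀ i ∈ Finset.univ, x i * (r * ∑ j, x j) = r * (∑ j, x j) * x i), ← Finset.mul_sum]
  simp only [Qf, hr]
  ring

lemma Qf_scale (d : ℕ) (ρ : ℝ) (t : ℝ) (z : Fin d → ℝ) :
    Qf d ρ (t⁻¹ • z) = Qf d ρ z / t ^ 2 := by
  simp only [Qf, Pi.smul_apply, smul_eq_mul, mul_pow, ← Finset.mul_sum]
  ring

lemma Qf_translate (d : ℕ) {ρ : ℝ} (hc : (1:ℝ) - ρ ≠ 0)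
    (hσ : (1:ℝ) + ((d:ℝ) - 1) * ρ ≠ 0) (t : ℝ) (y : Fin d → ℝ) :
    Qf d ρ (fun i => y i + t) =
      t ^ 2 * d / (1 + ((d:ℝ) - 1) * ρ) + 2 * t * (∑ i, y i) / (1 + ((d:ℝ) - 1) * ρ)
        + Qf d ρ y := by
  have hs : ∑ i, (y i + t) = (∑ i, y i) + d * t := by
    rw [Finset.sum_add_distrib]
    simp [Finset.card_univ, mul_comm]
  have hsq : ∑ i, (y i + t) ^ 2 = (∑ i, y i ^ 2) + 2 * t * (∑ i, y i) + d * t ^ 2 := by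
    rw [Finset.sum_congr rfl (fun i (_ : i ∈ Finset.univ) => by ring :
      ∀ i ∈ Finset.univ, (y i + t) ^ 2 = y i ^ 2 + 2 * t * y i + t ^ 2),
      Finset.sum_add_distrib, Finset.sum_add_distrib, ← Finset.mul_sum]
    simp [Finset.card_univ, mul_comm]
  have hσ' : (1:ℝ) + ρ * ((d:ℝ) - 1) ≠ 0 := by contrapose! hσ; linarith
  simp only [Qf, hs, hsq]
  field_simp
  ring

lemma Qf_nonneg (d : ℕ) {ρ : ℝ} (hc : (0:ℝ) < 1 - ρ)
    (hσ : (0:ℝ) < 1 + ((d:ℝ) - 1) * ρ) (x : Fin d → ℝ) : 0 ≤ Qf d ρ x := by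
  have hCS : (∑ i, x i) ^ 2 ≤ d * ∑ i, x i ^ 2 := by
    have := sq_sum_le_card_mul_sum_sq (s := (Finset.univ : Finset (Fin d))) (f := x)
    simpa [Finset.card_univ] using this
  have hsum_sq : (0:ℝ) ≤ ∑ i, x i ^ 2 := Finset.sum_nonneg fun i _ => sq_nonneg _
  have hrepr : Qf d ρ x = ((∑ i, x i ^ 2) * (1 + ((d:ℝ) - 1) * ρ) - ρ * (∑ i, x i) ^ 2)
      / ((1 - ρ) * (1 + ((d:ℝ) - 1) * ρ)) := by
    have hσ' : (1:ℝ) + ρ * ((d:ℝ) - 1) ≠ 0 := by contrapose! hσ; linarith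
    rw [Qf]
    field_simp
  rw [hrepr]
  apply div_nonneg _ (by positivity)
  rcases le_or_gt 0 ρ with hρ | hρ
  · nlinarith [mul_le_mul_of_nonneg_left hCS hρ, mul_nonneg hsum_sq hc.le]
  · nlinarith [mul_nonneg hsum_sq hσ.le,
      mul_nonneg (neg_nonneg.mpr hρ.le) (sq_nonneg (∑ i, x i))]

/-! ### Auxiliary measure theory -/

lemma measurableSet_pos (d : ℕ) : MeasurableSet {y : Fin d → ℝ | ∀ i, 0 < y i} := by
  have : {y : Fin d → ℝ | ∀ i, 0 < y i} = Set.univ.pi (fun _ => Set.Ioi (0:ℝ)) := by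
    ext y; simp [Set.mem_pi]
  rw [this]
  exact MeasurableSet.univ_pi fun i => measurableSet_Ioi

lemma measurableSet_gt (d : ℕ) (t : ℝ) : MeasurableSet {x : Fin d → ℝ | ∀ i, t < x i} := by
  have : {x : Fin d → ℝ | ∀ i, t < x i} = Set.univ.pi (fun _ => Set.Ioi t) := by
    ext y; simp [Set.mem_pi]
  rw [this]
  exact MeasurableSet.univ_pi fun i => measurableSet_Ioi

lemma setIntegral_translate (d : ℕ) (f : (Fin d → ℝ) → ℝ) (t : ℝ) :
    ∫ x in {x : Fin d → ℝ | ∀ i, t < x i}, f x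
      = ∫ y in {y : Fin d → ℝ | ∀ i, 0 < y i}, f (y + fun _ => t) := by
  rw [← integral_indicator (measurableSet_gt d t), ← integral_indicator (measurableSet_pos d)]
  rw [← integral_add_right_eq_self (fun x => Set.indicator {x : Fin d → ℝ | ∀ i, t < x i} f x)
    (fun _ => t)]
  congr 1
  ext y
  by_cases h : ∀ i, 0 < y i
  · rw [Set.indicator_of_mem (by
      intro i; simpa using h i : (y + fun _ => t) ∈ {x : Fin d → ℝ | ∀ i, t < x i}),
      Set.indicator_of_mem (show y ∈ {y : Fin d → ℝ | ∀ i, 0 < y i} from h)]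
  · rw [Set.indicator_of_notMem (by
      intro hmem; exact h (fun i => by have := hmem i; simpa using this)),
      Set.indicator_of_notMem (show y ∉ {y : Fin d → ℝ | ∀ i, 0 < y i} from h)]

lemma smul_pos_set (d : ℕ) {t : ℝ} (ht : 0 < t) :
    t • {y : Fin d → ℝ | ∀ i, 0 < y i} = {y : Fin d → ℝ | ∀ i, 0 < y i} := by
  ext z
  constructor
  · rintro ⟨y, hy, rfl⟩ i
    exact mul_pos ht (hy i)
  · intro hz
    exact ⟨t⁻¹ • z, fun i => mul_pos (inv_pos.mpr ht) (hz i), by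
      ext i; simp [smul_smul, mul_inv_cancel₀ ht.ne', ← mul_assoc]⟩

lemma setIntegral_scale (d : ℕ) (f : (Fin d → ℝ) → ℝ) {t : ℝ} (ht : 0 < t) :
    ∫ z in {y : Fin d → ℝ | ∀ i, 0 < y i}, f (t⁻¹ • z)
      = t ^ d * ∫ y in {y : Fin d → ℝ | ∀ i, 0 < y i}, f y := by
  rw [MeasureTheory.Measure.setIntegral_comp_smul_of_pos _ f _ (inv_pos.mpr ht),
    smul_pos_set d (inv_pos.mpr ht)]
  rw [Module.finrank_fin_fun, smul_eq_mul]
  congr 1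
  rw [← inv_pow, inv_inv]

lemma indicator_prod_eq (d : ℕ) (σ : ℝ) (z : Fin d → ℝ) :
    Set.indicator {y : Fin d → ℝ | ∀ i, 0 < y i} (fun z => Real.exp (-(∑ i, z i) / σ)) z
      = ∏ i, Set.indicator (Set.Ioi (0:ℝ)) (fun u => Real.exp (-u / σ)) (z i) := by
  by_cases h : ∀ i, 0 < z i
  · rw [Set.indicator_of_mem (show z ∈ {y : Fin d → ℝ | ∀ i, 0 < y i} from h)]
    rw [Finset.prod_congr rfl (fun i _ => Set.indicator_of_mem (Set.mem_Ioi.mpr (h i)) _)]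
    rw [← Real.exp_sum]
    congr 1
    rw [← Finset.sum_div, ← Finset.sum_neg_distrib]
  · rw [Set.indicator_of_notMem (show z ∉ {y : Fin d → ℝ | ∀ i, 0 < y i} from h)]
    push_neg at h
    obtain ⟨i, hi⟩ := h
    have hz0 : Set.indicator (Set.Ioi (0:ℝ)) (fun u => Real.exp (-u / σ)) (z i) = 0 :=
      Set.indicator_of_notMem (by simpa using hi) _
    exact (Finset.prod_eq_zero (Finset.mem_univ i) hz0).symm

lemma integrable_exp_ind {σ : ℝ} (hσ : 0 < σ) :
    Integrable (Set.indicator (Set.Ioi (0:ℝ)) (fun u => Real.exp (-u / σ))) := by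
  rw [integrable_indicator_iff measurableSet_Ioi]
  have : (fun u : ℝ => Real.exp (-u / σ)) = fun u => Real.exp (-σ⁻¹ * u) := by
    ext u; rw [neg_div, div_eq_inv_mul, ← neg_mul]
  rw [this]
  exact exp_neg_integrableOn_Ioi 0 (inv_pos.mpr hσ)

lemma integral_exp_ind {σ : ℝ} (hσ : 0 < σ) :
    (∫ u : ℝ, Set.indicator (Set.Ioi (0:ℝ)) (fun u => Real.exp (-u / σ)) u) = σ := by
  rw [integral_indicator measurableSet_Ioi]
  have : ∀ u : ℝ, Real.exp (-u / σ) = (fun v => Real.exp (-v)) (σ⁻¹ * u) := by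
    intro u; rw [neg_div, div_eq_inv_mul]
  rw [setIntegral_congr_fun measurableSet_Ioi (fun u _ => this u),
    integral_comp_mul_left_Ioi (fun v => Real.exp (-v)) 0 (inv_pos.mpr hσ), mul_zero,
    integral_exp_neg_Ioi]
  simp

lemma integrable_bound (d : ℕ) {σ : ℝ} (hσ : 0 < σ) :
    IntegrableOn (fun z : Fin d → ℝ => Real.exp (-(∑ i, z i) / σ))
      {y : Fin d → ℝ | ∀ i, 0 < y i} := by
  rw [← integrable_indicator_iff (measurableSet_pos d)]
  have : Set.indicator {y : Fin d → ℝ | ∀ i, 0 < y i} (fun z => Real.exp (-(∑ i, z i) / σ))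
      = fun z => ∏ i, Set.indicator (Set.Ioi (0:ℝ)) (fun u => Real.exp (-u / σ)) (z i) := by
    ext z; exact indicator_prod_eq d σ z
  rw [this]
  exact Integrable.fintype_prod (𝕜 := ℝ) fun i => integrable_exp_ind hσ

lemma integral_bound (d : ℕ) {σ : ℝ} (hσ : 0 < σ) :
    (∫ z in {y : Fin d → ℝ | ∀ i, 0 < y i}, Real.exp (-(∑ i, z i) / σ)) = σ ^ d := by
  rw [← integral_indicator (measurableSet_pos d)]
  have : Set.indicator {y : Fin d → ℝ | ∀ i, 0 < y i} (fun z => Real.exp (-(∑ i, z i) / σ))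
      = fun z => ∏ i, Set.indicator (Set.Ioi (0:ℝ)) (fun u => Real.exp (-u / σ)) (z i) := by
    ext z; exact indicator_prod_eq d σ z
  rw [this]
  beta_reduce
  rw [MeasureTheory.volume_pi, MeasureTheory.integral_fintype_prod_eq_pow (𝕜 := ℝ) (ι := Fin d)
    (Set.indicator (Set.Ioi (0:ℝ)) (fun u => Real.exp (-u / σ))), integral_exp_ind hσ,
    Fintype.card_fin]

lemma Qf_continuous (d : ℕ) (ρ : ℝ) : Continuous (Qf d ρ) := by
  unfold Qf
  exact ((continuous_finset_sum _ fun i _ => (continuous_apply i).pow 2).div_const _).sub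
    ((continuous_const.mul
      ((continuous_finset_sum _ fun i _ => continuous_apply i).pow 2)).div_const _)

lemma tendsto_J (d : ℕ) {ρ : ℝ} (hc : (0:ℝ) < 1 - ρ)
    (hσ : (0:ℝ) < 1 + ((d:ℝ) - 1) * ρ) :
    Tendsto (fun t : ℝ => ∫ z in {y : Fin d → ℝ | ∀ i, 0 < y i},
        Real.exp (-(∑ i, z i) / (1 + ((d:ℝ) - 1) * ρ) - Qf d ρ z / (2 * t ^ 2)))
      atTop (𝓝 ((1 + ((d:ℝ) - 1) * ρ) ^ d)) := by
  set σ : ℝ := 1 + ((d:ℝ) - 1) * ρ with hσdef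
  have hsum_cont : Continuous fun z : Fin d → ℝ => ∑ i, z i :=
    continuous_finset_sum _ fun i _ => continuous_apply i
  rw [← integral_bound d hσ]
  apply tendsto_integral_filter_of_dominated_convergence
    (fun z : Fin d → ℝ => Real.exp (-(∑ i, z i) / σ))
  · filter_upwards with t
    exact (Real.continuous_exp.comp
      ((hsum_cont.neg.div_const σ).sub ((Qf_continuous d ρ).div_const _))).aestronglyMeasurable
  · filter_upwards with t
    filter_upwards [ae_restrict_mem (measurableSet_pos d)] with z _
    rw [Real.norm_eq_abs, Real.abs_exp, Real.exp_le_exp]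
    have h1 : 0 ≤ Qf d ρ z / (2 * t ^ 2) := by
      rcases eq_or_ne t 0 with rfl | ht
      · simp
      · exact div_nonneg (Qf_nonneg d hc hσ z) (by positivity)
    linarith
  · exact integrable_bound d hσ
  · filter_upwards with z
    have h2t : Tendsto (fun t : ℝ => 2 * t ^ 2) atTop atTop :=
      (tendsto_pow_atTop two_ne_zero).const_mul_atTop (by norm_num)
    have h0 : Tendsto (fun t : ℝ => Qf d ρ z / (2 * t ^ 2)) atTop (𝓝 0) :=
      Tendsto.div_atTop tendsto_const_nhds h2t
    have hsub : Tendsto (fun t : ℝ => -(∑ i, z i) / σ - Qf d ρ z / (2 * t ^ 2)) atTop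
        (𝓝 (-(∑ i, z i) / σ - 0)) :=
      tendsto_const_nhds.sub h0
    have := (Real.continuous_exp.tendsto _).comp hsub
    simpa [Function.comp_def] using this

/-! ### Main theorem -/

/-- **Lemma A.4** (tail of the minimum of an equicorrelated Gaussian vector): for
`-1/(d-1) < ρ < 1`, one has `|Σ_d| = (-1)^{d-1}(ρ-1)^{d-1}((d-1)ρ+1)` and, as `t → ∞`,
`P(min_i X_i > t) ~ (2π)^{-d/2}|Σ_d|^{-1/2}((1+(d-1)ρ)/t)^d exp(-(t²d/2)/(1+(d-1)ρ))`;
in particular, for `d = 2`,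
`P(min(X_1,X_2) > t) ~ ((1+ρ)^{3/2}/(2π(1-ρ)^{1/2} t²)) exp(-t²/(1+ρ))`. -/
theorem gaussian_equicorrelated_min_tail
    (d : ℕ) (hd : 1 ≤ d) (ρ : ℝ)
    (hρl : -1 / ((d : ℝ) - 1) < ρ) (hρu : ρ < 1) :
    (covM d ρ).det = (-1 : ℝ) ^ (d - 1) * (ρ - 1) ^ (d - 1) * (((d : ℝ) - 1) * ρ + 1) ∧
    ((fun t => minTailProb d ρ t) ~[atTop]
      fun t => (2 * Real.pi) ^ (-(d : ℝ) / 2) * ((covM d ρ).det) ^ (-(1 : ℝ) / 2) *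
        ((1 + ((d : ℝ) - 1) * ρ) / t) ^ d *
          Real.exp (-(t ^ 2 * d / 2) / (1 + ((d : ℝ) - 1) * ρ))) ∧
    (d = 2 →
      (fun t => minTailProb d ρ t) ~[atTop]
        fun t => (1 + ρ) ^ ((3 : ℝ) / 2) / (2 * Real.pi * (1 - ρ) ^ ((1 : ℝ) / 2) * t ^ 2) *
          Real.exp (-(t ^ 2) / (1 + ρ))) := by
  have hd1 : (1:ℝ) ≤ (d:ℝ) := by exact_mod_cast hd
  have hc : (0:ℝ) < 1 - ρ := by linarith
  have hσ : (0:ℝ) < 1 + ((d:ℝ) - 1) * ρ := by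
    rcases eq_or_lt_of_le hd1 with h1 | h1
    · rw [← h1]; norm_num
    · have hdpos : (0:ℝ) < (d:ℝ) - 1 := by linarith
      have := (div_lt_iff₀ hdpos).mp hρl
      nlinarith
  have hdet : (covM d ρ).det = (1 - ρ) ^ (d - 1) * (1 + ((d:ℝ) - 1) * ρ) :=
    det_covM d hd hc.ne'
  have hdetpos : 0 < (covM d ρ).det := by
    rw [hdet]; positivity
  have hCpos : 0 < (2 * Real.pi) ^ (-(d : ℝ) / 2) * ((covM d ρ).det) ^ (-(1 : ℝ) / 2) :=
    mul_pos (Real.rpow_pos_of_pos (by positivity) _) (Real.rpow_pos_of_pos hdetpos _)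
  -- the key exact representation of the tail probability
  have key : ∀ t : ℝ, minTailProb d ρ t
      = ((2 * Real.pi) ^ (-(d : ℝ) / 2) * ((covM d ρ).det) ^ (-(1 : ℝ) / 2)) *
        (Real.exp (-(t ^ 2 * d / 2) / (1 + ((d:ℝ) - 1) * ρ)) *
          ∫ y in {y : Fin d → ℝ | ∀ i, 0 < y i},
            Real.exp (-(t * ∑ i, y i) / (1 + ((d:ℝ) - 1) * ρ) - Qf d ρ y / 2)) := by
    intro t
    rw [minTailProb, MeasureTheory.integral_const_mul]
    congr 1
    simp only [inv_covM d hd hc.ne' hσ.ne', dot_invM]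
    rw [setIntegral_translate d (fun x => Real.exp (-(Qf d ρ x) / 2)) t]
    have hpt : ∀ y : Fin d → ℝ,
        Real.exp (-(Qf d ρ (y + fun _ => t)) / 2)
          = Real.exp (-(t ^ 2 * d / 2) / (1 + ((d:ℝ) - 1) * ρ)) *
            Real.exp (-(t * ∑ i, y i) / (1 + ((d:ℝ) - 1) * ρ) - Qf d ρ y / 2) := by
      intro y
      have : Qf d ρ (y + fun _ => t) = Qf d ρ (fun i => y i + t) := rfl
      rw [this, Qf_translate d hc.ne' hσ.ne' t y, ← Real.exp_add]
      congr 1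
      ring
    simp only [hpt]
    rw [MeasureTheory.integral_const_mul]
  -- scaling step
  have hIJ : ∀ t : ℝ, 0 < t →
      (∫ z in {y : Fin d → ℝ | ∀ i, 0 < y i},
        Real.exp (-(∑ i, z i) / (1 + ((d:ℝ) - 1) * ρ) - Qf d ρ z / (2 * t ^ 2)))
      = t ^ d * ∫ y in {y : Fin d → ℝ | ∀ i, 0 < y i},
          Real.exp (-(t * ∑ i, y i) / (1 + ((d:ℝ) - 1) * ρ) - Qf d ρ y / 2) := by
    intro t ht
    rw [← setIntegral_scale d
      (fun y => Real.exp (-(t * ∑ i, y i) / (1 + ((d:ℝ) - 1) * ρ) - Qf d ρ y / 2)) ht]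
    apply setIntegral_congr_fun (measurableSet_pos d)
    intro z _
    dsimp only
    have hsum : ∑ i, (t⁻¹ • z) i = t⁻¹ * ∑ i, z i := by
      simp [Finset.mul_sum]
    rw [hsum, Qf_scale d ρ t z]
    congr 1
    have hcan : t * (t⁻¹ * ∑ i, z i) = ∑ i, z i := by
      rw [← mul_assoc, mul_inv_cancel₀ ht.ne', one_mul]
    rw [hcan]
    ring
  -- the asymptotic equivalence (general d)
  have main : (fun t => minTailProb d ρ t) ~[atTop]
      fun t => (2 * Real.pi) ^ (-(d : ℝ) / 2) * ((covM d ρ).det) ^ (-(1 : ℝ) / 2) *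
        ((1 + ((d : ℝ) - 1) * ρ) / t) ^ d *
          Real.exp (-(t ^ 2 * d / 2) / (1 + ((d : ℝ) - 1) * ρ)) := by
    apply Asymptotics.isEquivalent_of_tendsto_one
    · have hratio : ∀ᶠ t in atTop, minTailProb d ρ t /
          ((2 * Real.pi) ^ (-(d : ℝ) / 2) * ((covM d ρ).det) ^ (-(1 : ℝ) / 2) *
            ((1 + ((d : ℝ) - 1) * ρ) / t) ^ d *
              Real.exp (-(t ^ 2 * d / 2) / (1 + ((d : ℝ) - 1) * ρ)))
          = (∫ z in {y : Fin d → ℝ | ∀ i, 0 < y i},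
              Real.exp (-(∑ i, z i) / (1 + ((d:ℝ) - 1) * ρ) - Qf d ρ z / (2 * t ^ 2)))
            / (1 + ((d:ℝ) - 1) * ρ) ^ d := by
        filter_upwards [eventually_gt_atTop (0:ℝ)] with t ht
        rw [key t, hIJ t ht, div_pow]
        have htd : (0:ℝ) < t ^ d := pow_pos ht d
        field_simp
      simp only [Pi.div_def]
      rw [tendsto_congr' hratio]
      have := (tendsto_J d hc hσ).div_const ((1 + ((d:ℝ) - 1) * ρ) ^ d)
      rwa [div_self (pow_ne_zero d hσ.ne')] at this
  refine ⟨?_, main, ?_⟩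
  · rw [hdet, show (1:ℝ) - ρ = (-1) * (ρ - 1) by ring, mul_pow]
    ring
  · intro hd2
    subst hd2
    refine main.trans (Filter.EventuallyEq.isEquivalent ?_)
    filter_upwards [eventually_gt_atTop (0:ℝ)] with t ht
    have hcast : ((2:ℕ):ℝ) = 2 := by norm_num
    have h1ρ : (0:ℝ) < 1 + ρ := by
      have h' : (1:ℝ) + (((2:ℕ):ℝ) - 1) * ρ = 1 + ρ := by rw [hcast]; ring
      rwa [h'] at hσ
    have hdet2 : (covM 2 ρ).det = (1 - ρ) * (1 + ρ) := by
      rw [hdet, hcast]; norm_num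
    rw [hdet2, hcast]
    rw [show (1:ℝ) + (2 - 1) * ρ = 1 + ρ by ring]
    rw [show ((-2:ℝ) / 2) = (-1 : ℝ) by norm_num, Real.rpow_neg_one,
      Real.mul_rpow hc.le h1ρ.le,
      show ((-1:ℝ) / 2) = -((1:ℝ)/2) by norm_num,
      Real.rpow_neg hc.le, Real.rpow_neg h1ρ.le, div_pow]
    have h32 : (1+ρ) ^ ((3:ℝ)/2) = (1+ρ)^2 * ((1+ρ) ^ ((1:ℝ)/2))⁻¹ := by
      rw [← Real.rpow_natCast (1+ρ) 2, ← Real.rpow_neg h1ρ.le, ← Real.rpow_add h1ρ]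
      norm_num
    rw [h32, show -(t ^ 2 * 2 / 2) / (1 + ρ) = -t ^ 2 / (1 + ρ) by ring]
    ring
  
end GaussianTail
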